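/- Let S be a finite abelian 2-group and F a saturated fusion system on S. Then B(F)^× = B(S)^× if and only if F = F_S(S), the trivial fusion system on S (the fusion system whose morphisms are exactly those induced by conjugation in S, i.e. all inclusions since S is abelian). -/

import Mathlib

namespace BurnsideFusion

/-! ### The Burnside ring, realized via marks inside the ghost ring -/

/-- The vector of marks of the transitive `G`-set `G/K`:
its value at `H ≤ G` is the number of `H`-fixed points of `G/K`. -/
noncomputable def markVector (G : Type*) [Group G] (K : Subgroup G) : Subgroup G → ℤ :=
  fun H => (Nat.card {x : G ⧸ K // ∀ h : G, h ∈ H → h • x = x} : ℤ)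

/-- The Burnside ring of `G`, realized (faithfully, via the injective mark homomorphism)
as the subring of the ghost ring `∏_{H ≤ G} ℤ` generated by the marks of the
transitive `G`-sets `G/K`.  The mark of an element `a` at `H` is just `a H`. -/
noncomputable def burnsideRing (G : Type*) [Group G] : Subring (Subgroup G → ℤ) :=
  Subring.closure (Set.range (markVector G))

/-- The unit group `B(G)^×` of the Burnside ring, as a set:
since every unit of `B(G)` has all marks `±1`, the units are exactly the
elements squaring to `1`. -/
def burnsideUnits (G : Type*) [Group G] : Set (Subgroup G → ℤ) :=
  {b | b ∈ burnsideRing G ∧ b * b = 1}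

/-- Restriction `B(G) → B(S)` for `S ≤ G`, on marks:
`(n_H)_{H ≤ G} ↦ (n_P)_{P ≤ S}`. -/
def resMark {G : Type*} [Group G] (S : Subgroup G) (b : Subgroup G → ℤ) :
    Subgroup ↥S → ℤ :=
  fun P => b (P.map S.subtype)

/-- The action of a (bijective) endomorphism `f` of `G` on the ghost ring, on marks:
`(f · b)_Q = b_{f⁻¹(Q)}`. -/
def autAct {G : Type*} [Group G] (f : G →* G) (b : Subgroup G → ℤ) : Subgroup G → ℤ :=
  fun Q => b (Q.comap f)

/-- The elements of the Burnside ring fixed by a set `A` of automorphisms of `G`.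
(For `A = Aut_F(P)` this is `B(P)^{Out_F(P)}`, since the inner automorphisms
act trivially on `B(P)`.) -/
def fixedBurnside (G : Type*) [Group G] (A : Set (MulAut G)) : Set (Subgroup G → ℤ) :=
  {b | b ∈ burnsideRing G ∧ ∀ α ∈ A, autAct α.toMonoidHom b = b}

/-- The units of the Burnside ring fixed by a set `A` of automorphisms of `G`. -/
def fixedUnits (G : Type*) [Group G] (A : Set (MulAut G)) : Set (Subgroup G → ℤ) :=
  {b | b ∈ burnsideUnits G ∧ ∀ α ∈ A, autAct α.toMonoidHom b = b}

/-- The relative trace map `tr^Γ_Δ` on the (units of the) Burnside ring: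
the product of `α · b` over a set of representatives `α` of the cosets `Γ/Δ`. -/
noncomputable def relTrace {G : Type*} [Group G] (Γ Δ : Subgroup (MulAut G))
    (b : Subgroup G → ℤ) : Subgroup G → ℤ :=
  ∏ᶠ c : ↥Γ ⧸ Δ.subgroupOf Γ, autAct ((Quotient.out c : ↥Γ) : MulAut G).toMonoidHom b

/-! ### Fusion systems -/

/-- The homomorphism `P → Q` induced by conjugation by `s`. -/
def conjMap {S : Type*} [Group S] (s : S) (P Q : Subgroup S)
    (h : ∀ x ∈ P, s * x * s⁻¹ ∈ Q) : ↥P →* ↥Q where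
  toFun x := ⟨s * ↑x * s⁻¹, h x x.2⟩
  map_one' := by ext; simp
  map_mul' x y := by ext; simp

/-- A fusion system `F` on a group `S`: a category whose objects are the subgroups
of `S` and whose morphisms are injective group homomorphisms, containing all the
homomorphisms induced by conjugation in `S`, and such that every morphism factors
as an isomorphism in `F` followed by an inclusion. -/
structure FusionSystem (S : Type*) [Group S] where
  /-- The set of `F`-morphisms `P → Q`. -/
  Hom : ∀ P Q : Subgroup S, Set (↥P →* ↥Q)
  /-- All morphisms are injective. -/
  inj : ∀ {P Q : Subgroup S} {f : ↥P →* ↥Q}, f ∈ Hom P Q → Function.Injective f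
  /-- `Hom_S(P,Q) ⊆ Hom_F(P,Q)`. -/
  conj_mem : ∀ (s : S) (P Q : Subgroup S) (h : ∀ x ∈ P, s * x * s⁻¹ ∈ Q),
    conjMap s P Q h ∈ Hom P Q
  /-- Morphisms compose. -/
  comp_mem : ∀ {P Q R : Subgroup S} {f : ↥P →* ↥Q} {g : ↥Q →* ↥R},
    f ∈ Hom P Q → g ∈ Hom Q R → g.comp f ∈ Hom P R
  /-- Every morphism factors as an isomorphism in `F` onto its image followed by an
  inclusion. -/
  factor_mem : ∀ {P Q : Subgroup S} {f : ↥P →* ↥Q}, f ∈ Hom P Q →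
    ∃ (R : Subgroup S) (_ : R ≤ Q) (e : ↥P ≃* ↥R), e.toMonoidHom ∈ Hom P R ∧
      ∀ x : ↥P, ((e x : ↥R) : S) = ((f x : ↥Q) : S)
  /-- Isomorphisms in `F` are invertible in `F`. -/
  isoinv_mem : ∀ {P Q : Subgroup S} (e : ↥P ≃* ↥Q),
    e.toMonoidHom ∈ Hom P Q → e.symm.toMonoidHom ∈ Hom Q P

namespace FusionSystem

variable {S : Type*} [Group S] (F : FusionSystem S)

/-- Two subgroups of `S` are `F`-conjugate (isomorphic in `F`). -/
def SubConj (P Q : Subgroup S) : Prop :=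
  ∃ f ∈ F.Hom P Q, Function.Surjective ⇑f

/-- Two elements of `S` are `F`-conjugate: some `F`-isomorphism `⟨x⟩ → ⟨y⟩` sends
`x` to `y`. -/
def ElemConj (x y : S) : Prop :=
  ∃ f ∈ F.Hom (Subgroup.zpowers x) (Subgroup.zpowers y),
    f ⟨x, Subgroup.mem_zpowers x⟩ = ⟨y, Subgroup.mem_zpowers y⟩

/-- A subgroup `P ≤ S` is strongly closed in `F` if the `F`-conjugacy class of every
element of `P` is contained in `P`. -/
def StronglyClosed (P : Subgroup S) : Prop :=
  ∀ x ∈ P, ∀ y : S, F.ElemConj x y → y ∈ P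

/-- A subgroup `P` is normal in `F`: every morphism `φ ∈ Hom_F(Q,R)` extends to a
morphism `ψ ∈ Hom_F(QP, RP)` with `ψ|_Q = φ` and `ψ(P) = P`. -/
def NormalIn (P : Subgroup S) : Prop :=
  ∀ (Q R : Subgroup S), ∀ φ ∈ F.Hom Q R,
    ∃ ψ ∈ F.Hom (Q ⊔ P) (R ⊔ P),
      (∀ (x : S) (hx : x ∈ Q),
        ((ψ ⟨x, Subgroup.mem_sup_left hx⟩ : ↥(R ⊔ P)) : S) = ((φ ⟨x, hx⟩ : ↥R) : S)) ∧
      (∀ (x : S) (hx : x ∈ P),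
        ((ψ ⟨x, Subgroup.mem_sup_right hx⟩ : ↥(R ⊔ P)) : S) ∈ P) ∧
      (∀ y ∈ P, ∃ (x : S) (hx : x ∈ P),
        ((ψ ⟨x, Subgroup.mem_sup_right hx⟩ : ↥(R ⊔ P)) : S) = y)

/-- `Aut_F(P)`: the group of `F`-automorphisms of `P`. -/
def AutF (P : Subgroup S) : Subgroup (MulAut ↥P) where
  carrier := {α | α.toMonoidHom ∈ F.Hom P P}
  one_mem' := by
    have h : ∀ x ∈ P, (1 : S) * x * (1 : S)⁻¹ ∈ P := fun x hx => by simpa using hx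
    have h1 := F.conj_mem 1 P P h
    have e : conjMap (1 : S) P P h = (1 : MulAut ↥P).toMonoidHom := by
      ext x; simp [conjMap]
    rwa [e] at h1
  mul_mem' := by
    intro α β hα hβ
    have h := F.comp_mem hβ hα
    have e : α.toMonoidHom.comp β.toMonoidHom = (α * β).toMonoidHom := rfl
    rwa [e] at h
  inv_mem' := by
    intro α hα
    exact F.isoinv_mem α hα

end FusionSystem

/-- The conjugation automorphism of `P` induced by an element of its normalizer. -/
def conjAut {S : Type*} [Group S] (P : Subgroup S) (s : ↥(Subgroup.normalizer (P : Set S))) : MulAut ↥P where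
  toFun x := ⟨(s : S) * ↑x * (s : S)⁻¹, (Subgroup.mem_normalizer_iff.mp s.2 ↑x).mp x.2⟩
  invFun x := ⟨(s : S)⁻¹ * ↑x * (s : S), by
    have h := (Subgroup.mem_normalizer_iff.mp ((Subgroup.normalizer (P : Set S)).inv_mem s.2) (↑x : S)).mp x.2
    simpa using h⟩
  left_inv x := by ext; simp; group
  right_inv x := by ext; simp; group
  map_mul' x y := by ext; simp

/-- The homomorphism `N_S(P) → Aut(P)` given by conjugation. -/
def conjAutHom {S : Type*} [Group S] (P : Subgroup S) : ↥(Subgroup.normalizer (P : Set S)) →* MulAut ↥P where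
  toFun := conjAut P
  map_one' := by ext x; simp [conjAut]
  map_mul' s t := by ext x; simp [conjAut]; group

/-- `Aut_S(P)`: the subgroup of `Aut(P)` of automorphisms induced by conjugation in `S`. -/
def AutS {S : Type*} [Group S] (P : Subgroup S) : Subgroup (MulAut ↥P) :=
  (conjAutHom P).range

end BurnsideFusion

namespace BurnsideFusion

variable {S : Type*} [Group S]

/-- The automorphism of `⊤ ≤ S` induced by an automorphism of `S`. -/
def topRestrict (α : MulAut S) : MulAut ↥(⊤ : Subgroup S) :=
  (Subgroup.topEquiv.trans α).trans Subgroup.topEquiv.symm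

theorem topRestrict_one : topRestrict (1 : MulAut S) = 1 := by
  ext x; simp [topRestrict]

theorem topRestrict_mul (α β : MulAut S) :
    topRestrict (α * β) = topRestrict α * topRestrict β := by
  ext x; simp [topRestrict]

theorem topRestrict_inv (α : MulAut S) :
    topRestrict α⁻¹ = (topRestrict α).symm := by
  ext x; simp [topRestrict, MulAut.inv_def]

/-- `Aut_F(S)`, realized as a subgroup of `Aut(S)`. -/
def FusionSystem.AutFS (F : FusionSystem S) : Subgroup (MulAut S) where
  carrier := {α | (topRestrict α).toMonoidHom ∈ F.Hom ⊤ ⊤}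
  one_mem' := by
    have h := (F.AutF ⊤).one_mem
    have h' : (1 : MulAut ↥(⊤ : Subgroup S)).toMonoidHom ∈ F.Hom ⊤ ⊤ := h
    simpa [Set.mem_setOf_eq, topRestrict_one] using h'
  mul_mem' := by
    intro α β hα hβ
    have h := F.comp_mem (hβ : (topRestrict β).toMonoidHom ∈ F.Hom ⊤ ⊤) hα
    have e : (topRestrict α).toMonoidHom.comp (topRestrict β).toMonoidHom
        = (topRestrict (α * β)).toMonoidHom := by
      rw [topRestrict_mul]; rfl
    rw [e] at h; exact h
  inv_mem' := by
    intro α hα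
    have h := F.isoinv_mem (topRestrict α) hα
    simpa [Set.mem_setOf_eq, topRestrict_inv] using h

end BurnsideFusion

namespace BurnsideFusion

variable {S : Type*} [Group S]

namespace FusionSystem

variable (F : FusionSystem S)

/-- `P` is fully normalized in `F`: its normalizer has maximal order in its
`F`-conjugacy class. -/
def FullyNormalized (P : Subgroup S) : Prop :=
  ∀ Q : Subgroup S, F.SubConj P Q → Nat.card ↥(Subgroup.normalizer (Q : Set S)) ≤ Nat.card ↥(Subgroup.normalizer (P : Set S))

/-- `P` is fully centralized in `F`: its centralizer has maximal order in its
`F`-conjugacy class. -/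
def FullyCentralized (P : Subgroup S) : Prop :=
  ∀ Q : Subgroup S, F.SubConj P Q →
    Nat.card ↥(Subgroup.centralizer (Q : Set S)) ≤ Nat.card ↥(Subgroup.centralizer (P : Set S))

/-- `P` is `F`-centric: every `F`-conjugate `Q` of `P` satisfies `C_S(Q) ≤ Q`. -/
def Centric (P : Subgroup S) : Prop :=
  ∀ Q : Subgroup S, F.SubConj P Q → Subgroup.centralizer (Q : Set S) ≤ Q

/-- `P` is fully `F`-automized: `Aut_S(P)` is a Sylow `p`-subgroup of `Aut_F(P)`. -/
def FullyAutomized (p : ℕ) (P : Subgroup S) : Prop :=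
  AutS P ≤ F.AutF P ∧ IsPGroup p ↥((AutS P).subgroupOf (F.AutF P)) ∧
    ¬ p ∣ ((AutS P).subgroupOf (F.AutF P)).index

end FusionSystem

/-- For an `F`-isomorphism `φ : P → Q`, the subset
`N_φ = { g ∈ N_S(P) | φ ∘ c_g ∘ φ⁻¹ ∈ Aut_S(Q) }` of `S`. -/
def NphiSet (P Q : Subgroup S) (φ : ↥P ≃* ↥Q) : Set S :=
  {g | ∃ hg : g ∈ Subgroup.normalizer (P : Set S), ∃ h : S, ∀ (x : S) (hx : x ∈ P),
    ((φ ⟨g * x * g⁻¹, (Subgroup.mem_normalizer_iff.mp hg x).mp hx⟩ : ↥Q) : S)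
      = h * ((φ ⟨x, hx⟩ : ↥Q) : S) * h⁻¹}

namespace FusionSystem

variable (F : FusionSystem S)

/-- `Q` is receptive in `F`: every `F`-isomorphism `φ : P → Q` extends to a morphism
in `F` defined on `N_φ`. -/
def Receptive (Q : Subgroup S) : Prop :=
  ∀ (P : Subgroup S) (φ : ↥P ≃* ↥Q), φ.toMonoidHom ∈ F.Hom P Q →
    ∃ T : Subgroup S, (T : Set S) = NphiSet P Q φ ∧
      ∃ ψ ∈ F.Hom T ⊤, ∀ (x : S) (hx : x ∈ P) (hx' : x ∈ T),
        ((ψ ⟨x, hx'⟩ : ↥(⊤ : Subgroup S)) : S) = ((φ ⟨x, hx⟩ : ↥Q) : S)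

/-- `F` is saturated: every `F`-conjugacy class of subgroups contains a fully
automized, receptive member. -/
def IsSaturated (p : ℕ) : Prop :=
  ∀ P : Subgroup S, ∃ Q : Subgroup S, F.SubConj P Q ∧ F.FullyAutomized p Q ∧ F.Receptive Q

end FusionSystem

theorem innRange_subgroupOf_normal (F : FusionSystem S) (P : Subgroup S) :
    (((MulAut.conj : ↥P →* MulAut ↥P).range).subgroupOf (F.AutF P)).Normal := by
  have h : ((MulAut.conj : ↥P →* MulAut ↥P).range).Normal := by
    constructor
    intro n hn g
    obtain ⟨x, rfl⟩ := hn
    refine ⟨g x, ?_⟩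
    ext y
    simp [MulAut.conj_apply, MulAut.inv_def, mul_assoc]
  exact h.subgroupOf _

/-- `Out_F(P) = Aut_F(P)/Inn(P)`. -/
def OutF (F : FusionSystem S) (P : Subgroup S) : Type _ :=
  ↥(F.AutF P) ⧸ ((MulAut.conj : ↥P →* MulAut ↥P).range.subgroupOf (F.AutF P))

noncomputable instance (F : FusionSystem S) (P : Subgroup S) : Group (OutF F P) :=
  letI := innRange_subgroupOf_normal F P
  QuotientGroup.Quotient.group _

/-- A strongly `p`-embedded subgroup: a proper subgroup `H < Γ` such that `p` divides
`|H|` and `p` does not divide `|H ∩ gHg⁻¹|` for every `g ∉ H`. -/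
def IsStronglyPEmbedded (p : ℕ) {Γ : Type*} [Group Γ] (H : Subgroup Γ) : Prop :=
  H ≠ ⊤ ∧ p ∣ Nat.card ↥H ∧
    ∀ g : Γ, g ∉ H → ¬ p ∣ Nat.card ↥(H ⊓ H.map (MulAut.conj g).toMonoidHom)

/-- `R` is `F`-essential: `R` is fully normalized, `F`-centric, and `Out_F(R)`
contains a strongly `p`-embedded subgroup. -/
def IsEssential (p : ℕ) (F : FusionSystem S) (R : Subgroup S) : Prop :=
  F.FullyNormalized R ∧ F.Centric R ∧
    ∃ H : Subgroup (OutF F R), IsStronglyPEmbedded p H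

/-- The Burnside ring `B(F)` of a fusion system: the subring of `B(S)` of elements
whose marks agree on `F`-conjugate subgroups. -/
noncomputable def FusionSystem.burnside (F : FusionSystem S) : Subring (Subgroup S → ℤ) where
  carrier := {b | b ∈ burnsideRing S ∧ ∀ P Q : Subgroup S, F.SubConj P Q → b P = b Q}
  zero_mem' := ⟨zero_mem _, fun _ _ _ => rfl⟩
  one_mem' := ⟨one_mem _, fun _ _ _ => rfl⟩
  add_mem' := fun ha hb => ⟨add_mem ha.1 hb.1, fun P Q h => by
    simp only [Pi.add_apply, ha.2 P Q h, hb.2 P Q h]⟩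
  mul_mem' := fun ha hb => ⟨mul_mem ha.1 hb.1, fun P Q h => by
    simp only [Pi.mul_apply, ha.2 P Q h, hb.2 P Q h]⟩
  neg_mem' := fun ha => ⟨neg_mem ha.1, fun P Q h => by
    simp only [Pi.neg_apply, ha.2 P Q h]⟩

/-- The unit group `B(F)^×` of the Burnside ring of a fusion system, as a set. -/
noncomputable def FusionSystem.burnsideUnits (F : FusionSystem S) : Set (Subgroup S → ℤ) :=
  {b | b ∈ F.burnside ∧ b * b = 1}

/-- `F`-conjugacy as an equivalence relation on the subgroups of `S`. -/
def fconjSetoid (F : FusionSystem S) : Setoid (Subgroup S) where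
  r := F.SubConj
  iseqv := by
    constructor
    · intro P
      refine ⟨conjMap 1 P P (fun x hx => by simpa using hx), F.conj_mem _ _ _ _, ?_⟩
      intro y; exact ⟨y, by ext; simp [conjMap]⟩
    · rintro P Q ⟨f, hf, hsurj⟩
      have hbij : Function.Bijective ⇑f := ⟨F.inj hf, hsurj⟩
      have he : (MulEquiv.ofBijective f hbij).toMonoidHom ∈ F.Hom P Q := by
        have : (MulEquiv.ofBijective f hbij).toMonoidHom = f := by ext x; rfl
        rwa [this]
      exact ⟨(MulEquiv.ofBijective f hbij).symm.toMonoidHom, F.isoinv_mem _ he,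
        (MulEquiv.ofBijective f hbij).symm.surjective⟩
    · rintro P Q R ⟨f, hf, hfs⟩ ⟨g, hg, hgs⟩
      exact ⟨g.comp f, F.comp_mem hf hg, hgs.comp hfs⟩

open Classical in
/-- The unit `v_M ∈ B(S)^×` attached to a maximal subgroup `M < S`:
its mark at `P` is `-1` if `P ≤ M` and `+1` otherwise. -/
noncomputable def vUnit (S : Type*) [Group S] (M : Subgroup S) : Subgroup S → ℤ :=
  fun P => if P ≤ M then -1 else 1

end BurnsideFusion

namespace BurnsideFusion

variable {G : Type*} [Group G]

/-- `S` is a Sylow `p`-subgroup of `G`. -/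
def IsSylow (p : ℕ) (S : Subgroup G) : Prop :=
  IsPGroup p ↥S ∧ ¬ p ∣ S.index

/-- `K` is a Sylow `p`-subgroup of `H` (both subgroups of an ambient group `G`). -/
def IsSylowIn (p : ℕ) (H K : Subgroup G) : Prop :=
  K ≤ H ∧ IsPGroup p ↥K ∧ ¬ p ∣ (K.subgroupOf H).index

/-- An element of the ghost ring of `S` has marks which agree on pairs of subgroups
of `S` that are conjugate by an element of `N ≤ G`.  For `N = ⊤` this is stability
for the Frobenius fusion system `F_S(G)`; for `N = N_G(S)` it is stability for
`F_S(N_G(S))`. -/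
def frobStable (S N : Subgroup G) (b : Subgroup ↥S → ℤ) : Prop :=
  ∀ P Q : Subgroup ↥S,
    (∃ g ∈ N, (P.map S.subtype).map (MulAut.conj g).toMonoidHom = Q.map S.subtype) →
    b P = b Q

/-- The Burnside ring `B(F_S(N))` of the fusion system on `S` induced by a subgroup
`N` of `G` containing `S`, as a subset of `B(S)`. -/
noncomputable def frobBurnside (S N : Subgroup G) : Set (Subgroup ↥S → ℤ) :=
  {b | b ∈ burnsideRing ↥S ∧ frobStable S N b}

/-- The unit group `B(F_S(N))^×`, as a set. -/
noncomputable def frobUnits (S N : Subgroup G) : Set (Subgroup ↥S → ℤ) :=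
  {b | b ∈ frobBurnside S N ∧ b * b = 1}

/-- Restriction `B(N) → B(S)` for `S ≤ N ≤ G`, on marks. -/
def resMark₂ (S N : Subgroup G) (b : Subgroup ↥N → ℤ) : Subgroup ↥S → ℤ :=
  fun P => b ((P.map S.subtype).subgroupOf N)

/-- Tensor induction `B(Ten^G_S) : B(S)^× → B(G)^×`, on marks: the mark of
`Ten^G_S b` at `H ≤ G` is the product over the double cosets `HgS` of the marks
`b_{(g⁻¹Hg ∩ S)}`. -/
noncomputable def tenInd (S : Subgroup G) (b : Subgroup ↥S → ℤ) : Subgroup G → ℤ :=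
  fun H => ∏ᶠ c : DoubleCoset.Quotient (H : Set G) (S : Set G),
    b ((H.comap (MulAut.conj (Quotient.out c)).toMonoidHom).subgroupOf S)

/-- `Aut_G(S)`: the automorphisms of `S ≤ G` induced by conjugation by elements
of `G` (as a set). -/
def autGSet (S : Subgroup G) : Set (MulAut ↥S) :=
  {α | ∃ g : G, ∀ x : ↥S, ((α x : ↥S) : G) = g * (x : G) * g⁻¹}

end BurnsideFusion

namespace BurnsideFusion

/-!
If `B(F)^× = B(S)^×`, then for every subgroup `M ≤ S` of index 2 the unit `v_M` lies in `B(F)`,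
so `F`-conjugate subgroups are either both contained in `M` or both not. As `S` is abelian,
receptivity extends every `F`-isomorphism to an element of `Aut_F(S)`, a group of odd order by
full automization of `S`. An automorphism `α` of odd order that preserves every subgroup of
index 2 acts trivially on `S/S²` (these subgroups separate the points of that
`𝔽₂`-vector space), and the kernel of `Aut(S) → Aut(S/S²)` is a 2-group, so `α = 1`. Hence
`Aut_F(S) = 1` and every `F`-morphism is an inclusion. Conversely, when `F = F_S(S)` distinct
subgroups are never `F`-conjugate, so `B(F) = B(S)`.
-/

theorem MulAut.exists_sq_apply_eq_mul_pow {S : Type*} [CommGroup S] {β : MulAut S} {m : ℕ}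
    (h : ∀ s, ∃ t, β s = s * t ^ (2 * m)) (s : S) : ∃ t, (β ^ 2) s = s * t ^ (2 * (2 * m)) := by
  obtain ⟨t, ht⟩ := h s
  obtain ⟨r, hr⟩ := h t
  refine ⟨t * r ^ m, ?_⟩
  calc (β ^ 2) s = s * t ^ (2 * m) * (t * r ^ (2 * m)) ^ (2 * m) := by
        rw [sq, MulAut.mul_apply, ht, map_mul, map_pow, ht, hr]
    _ = s * (t ^ (2 * m + 2 * m) * r ^ (2 * m * (2 * m))) := by
        rw [mul_pow, ← pow_mul, pow_add]; simp only [mul_assoc]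
    _ = s * (t * r ^ m) ^ (2 * (2 * m)) := by
        rw [mul_pow, ← pow_mul]; ring_nf

theorem MulAut.eq_one_of_odd_of_forall_apply_eq_mul_sq {S : Type*} [CommGroup S] [Finite S]
    (hS : IsPGroup 2 S) {α : MulAut S} (hα : Odd (orderOf α))
    (h : ∀ u, ∃ t, α u = u * t ^ 2) : α = 1 := by
  obtain ⟨e, he⟩ := IsPGroup.iff_card.mp hS
  have hpow : ∀ k s, ∃ t, (α ^ 2 ^ k) s = s * t ^ (2 * 2 ^ k) := by
    intro k
    induction k with
    | zero => simpa using h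
    | succ k ih =>
      intro s
      obtain ⟨t, ht⟩ := MulAut.exists_sq_apply_eq_mul_pow ih s
      exact ⟨t, by rwa [pow_succ 2 k, pow_mul, mul_comm _ 2]⟩
  have h2e : α ^ 2 ^ e = 1 := by
    ext s
    obtain ⟨t, ht⟩ := hpow e s
    rw [ht, pow_mul, ← he, pow_card_eq_one', mul_one, MulAut.one_apply]
  rw [← orderOf_eq_one_iff]
  exact ((Nat.coprime_two_right.mpr hα).pow_right e).eq_one_of_dvd (orderOf_dvd_of_pow_eq_one h2e)

theorem exists_index_two_not_mem {G : Type*} [CommGroup G] {v : G}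
    (hv : v ∉ (powMonoidHom 2 : G →* G).range) : ∃ M : Subgroup G, M.index = 2 ∧ v ∉ M := by
  set Sq := (powMonoidHom 2 : G →* G).range
  have hsq : ∀ a : Additive (G ⧸ Sq), 2 • a = 0 := by
    intro a
    induction a using QuotientGroup.induction_on with
    | H g => exact (QuotientGroup.eq_one_iff (g ^ 2)).mpr ⟨g, rfl⟩
  let _ : Module (ZMod 2) (Additive (G ⧸ Sq)) := AddCommGroup.zmodModule hsq
  obtain ⟨φ, hφ⟩ : ∃ φ : Module.Dual (ZMod 2) (Additive (G ⧸ Sq)),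
      φ (Additive.ofMul (v : G ⧸ Sq)) ≠ 0 := by
    by_contra! h
    exact hv ((QuotientGroup.eq_one_iff v).mp
      ((Module.forall_dual_apply_eq_zero_iff (ZMod 2) _).mp h))
  let χ : G →* Multiplicative (ZMod 2) :=
    (AddMonoidHom.toMultiplicativeRight φ.toAddMonoidHom).comp (QuotientGroup.mk' Sq)
  have hχv : χ v ≠ 1 := hφ
  have hcard : Nat.card (Multiplicative (ZMod 2)) = 2 := by simp
  have : Fact (Nat.card (Multiplicative (ZMod 2))).Prime := ⟨by rw [hcard]; exact Nat.prime_two⟩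
  have hrange : χ.range = ⊤ := χ.range.eq_bot_or_eq_top_of_prime_card.resolve_left
      fun h => hχv (by simpa [h] using χ.mem_range.mpr ⟨v, rfl⟩)
  refine ⟨χ.ker, ?_, fun h => hχv h⟩
  rw [Subgroup.index_ker, hrange, Subgroup.card_top, hcard]

theorem MulAut.eq_one_of_odd_of_forall_index_two {S : Type*} [CommGroup S] [Finite S]
    (hS : IsPGroup 2 S) {α : MulAut S} (hα : Odd (orderOf α))
    (h : ∀ M : Subgroup S, M.index = 2 → ∀ u, u ∈ M ↔ α u ∈ M) : α = 1 := by
  refine MulAut.eq_one_of_odd_of_forall_apply_eq_mul_sq hS hα fun u => ?_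
  by_contra! hu
  obtain ⟨M, hM, huM⟩ := exists_index_two_not_mem (v := u⁻¹ * α u) fun ⟨t, ht⟩ =>
    hu t (by rw [powMonoidHom_apply] at ht; rw [ht, mul_inv_cancel_left])
  exact huM ((Subgroup.mul_mem_iff_of_index_two hM).mpr (by rw [inv_mem_iff]; exact h M hM u))

theorem smul_coset_eq_self_iff {G : Type*} [Group G] {M : Subgroup G} [M.Normal] (h : G)
    (x : G ⧸ M) : h • x = x ↔ h ∈ M := by
  induction x using QuotientGroup.induction_on with
  | H g =>
    rw [MulAction.Quotient.smul_mk, smul_eq_mul, QuotientGroup.eq, mul_inv_rev, mul_assoc,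
      ‹M.Normal›.mem_comm_iff, mul_inv_cancel_right, inv_mem_iff]

open Classical in
theorem markVector_apply_of_normal {G : Type*} [Group G] (M : Subgroup G) [M.Normal]
    (H : Subgroup G) :
    markVector G M H = if H ≤ M then (M.index : ℤ) else 0 := by
  unfold markVector
  split_ifs with hHM
  · have hfix : ∀ x : G ⧸ M, ∀ h ∈ H, h • x = x := fun x h hh =>
      (smul_coset_eq_self_iff h x).mpr (hHM hh)
    rw [Nat.card_congr (Equiv.subtypeUnivEquiv hfix), Subgroup.index]
  · obtain ⟨h, hH, hM⟩ := SetLike.not_le_iff_exists.mp hHM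
    have : IsEmpty {x : G ⧸ M // ∀ h ∈ H, h • x = x} :=
      ⟨fun ⟨x, hx⟩ => hM ((smul_coset_eq_self_iff h x).mp (hx h hH))⟩
    simp

theorem vUnit_eq_one_sub_markVector {G : Type*} [Group G] {M : Subgroup G} (hM : M.index = 2) :
    vUnit G M = 1 - markVector G M := by
  have := Subgroup.normal_of_index_eq_two hM
  funext H
  simp only [vUnit, Pi.sub_apply, Pi.one_apply, markVector_apply_of_normal, hM]
  split_ifs <;> norm_num

theorem vUnit_mem_burnsideUnits {G : Type*} [Group G] {M : Subgroup G} (hM : M.index = 2) :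
    vUnit G M ∈ burnsideUnits G := by
  refine ⟨?_, ?_⟩
  · rw [vUnit_eq_one_sub_markVector hM]
    exact sub_mem (one_mem _) (Subring.subset_closure ⟨M, rfl⟩)
  · funext H
    simp only [vUnit, Pi.mul_apply, Pi.one_apply]
    split_ifs <;> norm_num

theorem nphiSet_eq_univ {S : Type*} [CommGroup S] (P Q : Subgroup S) (φ : ↥P ≃* ↥Q) :
    NphiSet P Q φ = Set.univ := by
  refine Set.eq_univ_of_forall fun g => ⟨?_, 1, fun x hx => ?_⟩
  · exact Subgroup.mem_normalizer_iff.mpr fun h => by rw [mul_inv_cancel_comm]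
  · simp only [one_mul, inv_one, mul_one, mul_inv_cancel_comm]

namespace FusionSystem

section Group

variable {S : Type*} [Group S] (F : FusionSystem S)

theorem mem_hom_of_forall_conj {P Q : Subgroup S} {f : ↥P →* ↥Q} (s : S)
    (hs : ∀ x : ↥P, ((f x : ↥Q) : S) = s * (x : S) * s⁻¹) : f ∈ F.Hom P Q := by
  have h : ∀ x ∈ P, s * x * s⁻¹ ∈ Q := fun x hx => hs ⟨x, hx⟩ ▸ (f ⟨x, hx⟩).2
  convert F.conj_mem s P Q h
  ext x
  exact hs x

theorem subConj_of_mem_hom {P Q R : Subgroup S} {f : ↥P →* ↥Q} (hf : f ∈ F.Hom P Q)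
    (hR : ∀ y, y ∈ R ↔ ∃ x : ↥P, ((f x : ↥Q) : S) = y) : F.SubConj P R := by
  obtain ⟨R', -, e, he, hef⟩ := F.factor_mem hf
  obtain rfl : R' = R := by
    ext y
    rw [hR]
    simp_rw [← hef]
    exact ⟨fun hy => ⟨e.symm ⟨y, hy⟩, by simp⟩, by rintro ⟨x, rfl⟩; exact (e x).2⟩
  exact ⟨e.toMonoidHom, he, e.surjective⟩

variable {F} in
theorem SubConj.exists_mulEquiv {P Q : Subgroup S} (h : F.SubConj P Q) :
    ∃ χ : ↥P ≃* ↥Q, χ.toMonoidHom ∈ F.Hom P Q := by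
  obtain ⟨f, hf, hsurj⟩ := h
  exact ⟨MulEquiv.ofBijective f ⟨F.inj hf, hsurj⟩, hf⟩

theorem autFS_eq_comap :
    F.AutFS = (F.AutF ⊤).comap (MulAut.congr Subgroup.topEquiv.symm).toMonoidHom :=
  rfl

theorem subConj_map_of_mem_autFS {α : MulAut S} (hα : α ∈ F.AutFS) (P : Subgroup S) :
    F.SubConj P (P.map α.toMonoidHom) := by
  have hincl : Subgroup.inclusion le_top ∈ F.Hom P ⊤ :=
    F.mem_hom_of_forall_conj 1 fun x => by simp
  refine F.subConj_of_mem_hom (F.comp_mem hincl hα) fun y => ?_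
  simp [topRestrict]

theorem exists_autFS_of_mem_hom_top [Finite S] {ψ : ↥(⊤ : Subgroup S) →* ↥(⊤ : Subgroup S)}
    (hψ : ψ ∈ F.Hom ⊤ ⊤) : ∃ α ∈ F.AutFS, ∀ x, α x = (ψ ⟨x, Subgroup.mem_top x⟩ : S) := by
  let Ψ := MulEquiv.ofBijective ψ (Finite.injective_iff_bijective.mp (F.inj hψ))
  refine ⟨(MulAut.congr Subgroup.topEquiv.symm).symm Ψ, ?_, fun x => rfl⟩
  rw [autFS_eq_comap, Subgroup.mem_comap, MulEquiv.coe_toMonoidHom, MulEquiv.apply_symm_apply]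
  exact hψ

variable {F}

theorem le_iff_le_of_subConj (h : F.burnsideUnits = BurnsideFusion.burnsideUnits S)
    {M : Subgroup S} (hM : M.index = 2) {P Q : Subgroup S} (hPQ : F.SubConj P Q) :
    P ≤ M ↔ Q ≤ M := by
  have hv : vUnit S M ∈ F.burnsideUnits := h ▸ vUnit_mem_burnsideUnits hM
  have hPQ' := hv.1.2 P Q hPQ
  simp only [vUnit] at hPQ'
  split_ifs at hPQ' <;> simp_all

theorem burnsideUnits_eq_of_subConj_eq (h : ∀ P Q, F.SubConj P Q → P = Q) :
    F.burnsideUnits = BurnsideFusion.burnsideUnits S := by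
  ext b
  exact ⟨fun ⟨hb, hb2⟩ => ⟨hb.1, hb2⟩,
    fun ⟨hb, hb2⟩ => ⟨⟨hb, fun P Q hPQ => by rw [h P Q hPQ]⟩, hb2⟩⟩

end Group

section CommGroup

variable {S : Type*} [CommGroup S]

theorem Receptive.exists_autFS_extend [Finite S] {F : FusionSystem S} {P R : Subgroup S}
    (hR : F.Receptive R) (ψ : ↥P ≃* ↥R) (hψ : ψ.toMonoidHom ∈ F.Hom P R) :
    ∃ α ∈ F.AutFS, ∀ x : ↥P, α x = ψ x := by
  obtain ⟨T, hT, ψ', hψ', hext⟩ := hR P ψ hψ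
  obtain rfl : T = ⊤ := Subgroup.coe_eq_univ.mp (hT.trans (nphiSet_eq_univ P R ψ))
  obtain ⟨α, hα, hαψ'⟩ := F.exists_autFS_of_mem_hom_top hψ'
  exact ⟨α, hα, fun x => (hαψ' x).trans (hext x x.2 _)⟩

theorem eq_of_subConj_of_forall_conj {F : FusionSystem S}
    (hconj : ∀ (P Q : Subgroup S) (f : ↥P →* ↥Q), f ∈ F.Hom P Q →
      ∃ s : S, ∀ x : ↥P, ((f x : ↥Q) : S) = s * (x : S) * s⁻¹)
    {P Q : Subgroup S} (hPQ : F.SubConj P Q) : P = Q := by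
  obtain ⟨f, hf, hsurj⟩ := hPQ
  obtain ⟨s, hs⟩ := hconj P Q f hf
  have hfix : ∀ x : ↥P, ((f x : ↥Q) : S) = x := fun x => by rw [hs, mul_inv_cancel_comm]
  ext y
  refine ⟨fun hy => ?_, fun hy => ?_⟩
  · simpa only [hfix] using (f ⟨y, hy⟩).2
  · obtain ⟨x, hx⟩ := hsurj ⟨y, hy⟩
    rw [← show ((f x : ↥Q) : S) = y from congrArg Subtype.val hx, hfix]
    exact x.2

variable [Finite S] {F : FusionSystem S} {p : ℕ}

theorem exists_autFS_extend (hF : F.IsSaturated p) {P Q : Subgroup S} (φ : ↥P ≃* ↥Q)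
    (hφ : φ.toMonoidHom ∈ F.Hom P Q) : ∃ α ∈ F.AutFS, ∀ x : ↥P, α x = φ x := by
  obtain ⟨R, hQR, -, hR⟩ := hF Q
  obtain ⟨χ, hχ⟩ := hQR.exists_mulEquiv
  obtain ⟨β, hβ, hβφ⟩ := hR.exists_autFS_extend (φ.trans χ) (F.comp_mem hφ hχ)
  obtain ⟨γ, hγ, hγχ⟩ := hR.exists_autFS_extend χ hχ
  refine ⟨γ⁻¹ * β, mul_mem (inv_mem hγ) hβ, fun x => ?_⟩
  rw [MulAut.mul_apply, hβφ, MulAut.inv_def, MulEquiv.symm_apply_eq, hγχ]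
  rfl

theorem exists_autFS_apply_eq (hF : F.IsSaturated p) {P Q : Subgroup S} {f : ↥P →* ↥Q}
    (hf : f ∈ F.Hom P Q) : ∃ α ∈ F.AutFS, ∀ x : ↥P, α x = f x := by
  obtain ⟨R, -, e, he, hef⟩ := F.factor_mem hf
  obtain ⟨α, hα, hαe⟩ := exists_autFS_extend hF e he
  exact ⟨α, hα, fun x => (hαe x).trans (hef x)⟩

theorem not_dvd_card_autF_top (hF : F.IsSaturated p) : ¬ p ∣ Nat.card (F.AutF ⊤) := by
  obtain ⟨Q, hQ, ⟨-, -, hindex⟩, -⟩ := hF ⊤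
  obtain rfl : Q = ⊤ := by
    obtain ⟨χ, -⟩ := hQ.exists_mulEquiv
    exact Q.eq_top_of_card_eq (by rw [← Nat.card_congr χ.toEquiv, Subgroup.card_top])
  have hAutS : AutS (⊤ : Subgroup S) = ⊥ := by
    rw [eq_bot_iff]
    rintro _ ⟨s, rfl⟩
    exact MulEquiv.ext fun x => Subtype.ext (mul_inv_cancel_comm (s : S) x)
  rwa [hAutS, Subgroup.bot_subgroupOf, Subgroup.index_bot] at hindex

theorem odd_orderOf_of_mem_autFS (hF : F.IsSaturated 2) {α : MulAut S} (hα : α ∈ F.AutFS) :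
    Odd (orderOf α) := by
  have hcard : Nat.card F.AutFS ∣ Nat.card (F.AutF ⊤) := by
    rw [autFS_eq_comap]
    exact Subgroup.card_comap_dvd_of_injective _ _ (MulEquiv.injective _)
  have hdvd : orderOf α ∣ Nat.card (F.AutF ⊤) := by
    rw [← Subgroup.orderOf_mk α hα]
    exact (orderOf_dvd_natCard _).trans hcard
  exact Nat.odd_iff.mpr (Nat.two_dvd_ne_zero.mp fun h2 => not_dvd_card_autF_top hF (h2.trans hdvd))

theorem eq_one_of_mem_autFS_of_burnsideUnits_eq (hS : IsPGroup 2 S) (hF : F.IsSaturated 2)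
    (h : F.burnsideUnits = BurnsideFusion.burnsideUnits S) {α : MulAut S} (hα : α ∈ F.AutFS) :
    α = 1 :=
  MulAut.eq_one_of_odd_of_forall_index_two hS (odd_orderOf_of_mem_autFS hF hα) fun M hM u => by
    simpa [Subgroup.zpowers_le, MonoidHom.map_zpowers] using
      le_iff_le_of_subConj h hM (F.subConj_map_of_mem_autFS hα (Subgroup.zpowers u))

end CommGroup

end FusionSystem

theorem statement19 {S : Type*} [CommGroup S] [Finite S] (hS : IsPGroup 2 S)
    (F : FusionSystem S) (hF : F.IsSaturated 2) :
    F.burnsideUnits = burnsideUnits S ↔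
      ∀ (P Q : Subgroup S) (f : ↥P →* ↥Q),
        f ∈ F.Hom P Q ↔ ∃ s : S, ∀ x : ↥P, ((f x : ↥Q) : S) = s * (x : S) * s⁻¹ := by
  constructor
  · intro h P Q f
    refine ⟨fun hf => ⟨1, fun x => ?_⟩, fun ⟨s, hs⟩ => F.mem_hom_of_forall_conj s hs⟩
    obtain ⟨α, hα, hαf⟩ := FusionSystem.exists_autFS_apply_eq hF hf
    rw [← hαf, FusionSystem.eq_one_of_mem_autFS_of_burnsideUnits_eq hS hF h hα]
    simp
  · intro hconj
    exact FusionSystem.burnsideUnits_eq_of_subConj_eq fun P Q =>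
      FusionSystem.eq_of_subConj_of_forall_conj fun P Q f => (hconj P Q f).mp

end BurnsideFusion
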